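/- Let φ : Sym_m⁺ → Sym_m be a bijection, let a ∈ Sym_m with ‖a‖ = 1, let δ(t) = φ⁻¹(t·a) for t ≥ 0, and let p, x ∈ Sym_m⁺ with x ≠ p. Then the function t ↦ d(x,p) · (d(⊖p ⊕ x, δ(t)) − t) / ‖⊖p ⊕ x‖_S tends to ⟨a, φ(p) − φ(x)⟩ as t → ∞. (That is, the signed point-to-hyperplane distance d̄(x, H_{ξ,p}) = d(x,p) · B_ξ(⊖p ⊕ x) / ‖⊖p ⊕ x‖_S, with ξ the class of δ and B_ξ the Busemann function of δ, equals ⟨a, φ(p) − φ(x)⟩.) -/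

import Mathlib

open Filter Matrix

/-- The Frobenius inner product `⟨A, B⟩ = Tr (Aᵀ B)` on real square matrices. -/
noncomputable def frobInner {m : ℕ} (A B : Matrix (Fin m) (Fin m) ℝ) : ℝ :=
  (Aᵀ * B).trace

/-- The Frobenius norm induced by the Frobenius inner product. -/
noncomputable def frobNorm {m : ℕ} (A : Matrix (Fin m) (Fin m) ℝ) : ℝ :=
  Real.sqrt (frobInner A A)

/-- The space `Sym_m⁺` of `m × m` real positive definite matrices. -/
def SPD (m : ℕ) : Type := { A : Matrix (Fin m) (Fin m) ℝ // A.PosDef }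

/-- The space `Sym_m` of `m × m` real symmetric matrices. -/
def SymMat (m : ℕ) : Type := { A : Matrix (Fin m) (Fin m) ℝ // A.IsSymm }

/-- The binary operation `x ⊕ y = φ⁻¹ (φ x + φ y)` on `Sym_m⁺`. -/
noncomputable def oplus {m : ℕ} (φ : SPD m ≃ SymMat m) (x y : SPD m) : SPD m :=
  φ.symm ⟨(φ x).1 + (φ y).1, (φ x).2.add (φ y).2⟩

/-- The inverse operation `⊖ x = φ⁻¹ (−φ x)` on `Sym_m⁺`. -/
noncomputable def ominus {m : ℕ} (φ : SPD m ≃ SymMat m) (x : SPD m) : SPD m :=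
  φ.symm ⟨-(φ x).1, (φ x).2.neg⟩

/-- The pullback distance `d(x, y) = ‖φ x − φ y‖` on `Sym_m⁺`. -/
noncomputable def pbDist {m : ℕ} (φ : SPD m ≃ SymMat m) (x y : SPD m) : ℝ :=
  frobNorm ((φ x).1 - (φ y).1)

/-- The norm `‖x‖_S = ‖φ x‖` induced by the inner product `⟨x, y⟩_S = ⟨φ x, φ y⟩`. -/
noncomputable def sNorm {m : ℕ} (φ : SPD m ≃ SymMat m) (x : SPD m) : ℝ :=
  frobNorm (φ x).1

/-- Let `φ : Sym_m⁺ → Sym_m` be a bijection, `a ∈ Sym_m` with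
Frobenius norm `1`, `δ t = φ⁻¹ (t • a)`, and `p, x ∈ Sym_m⁺` with `x ≠ p`.  Then
`t ↦ d(x,p) · (d(⊖p ⊕ x, δ t) − t) / ‖⊖p ⊕ x‖_S` tends to `⟨a, φ p − φ x⟩` as
`t → ∞`; i.e. the signed point-to-hyperplane distance
`d̄(x, H_{ξ,p}) = d(x,p) · B_ξ(⊖p ⊕ x) / ‖⊖p ⊕ x‖_S` equals `⟨a, φ p − φ x⟩`. -/
noncomputable def mE {m : ℕ} (A : Matrix (Fin m) (Fin m) ℝ) :
    EuclideanSpace ℝ (Fin m × Fin m) := WithLp.toLp 2 (fun q : Fin m × Fin m => A q.1 q.2)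

lemma mE_inner {m : ℕ} (A B : Matrix (Fin m) (Fin m) ℝ) :
    (inner ℝ (mE A) (mE B) : ℝ) = frobInner A B := by
  simp [mE, frobInner, Matrix.trace, Matrix.mul_apply, PiLp.inner_apply,
    Fintype.sum_prod_type, Matrix.diag]
  rw [Finset.sum_comm]
  exact Finset.sum_congr rfl fun _ _ => Finset.sum_congr rfl fun _ _ => mul_comm _ _

lemma mE_norm {m : ℕ} (A : Matrix (Fin m) (Fin m) ℝ) : ‖mE A‖ = frobNorm A := by
  rw [frobNorm, ← mE_inner, real_inner_self_eq_norm_sq, Real.sqrt_sq (norm_nonneg _)]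

lemma busemann {E : Type*} [NormedAddCommGroup E] [InnerProductSpace ℝ E]
    (a v : E) (ha : ‖a‖ = 1) :
    Tendsto (fun t : ℝ => ‖v - t • a‖ - t) atTop (nhds (-(inner ℝ a v : ℝ))) := by
  have h1 : Tendsto (fun t : ℝ => t⁻¹ • v) atTop (nhds 0) := by
    simpa using (tendsto_inv_atTop_zero : Tendsto (fun t : ℝ => t⁻¹) atTop (nhds 0)).smul_const v
  have h2 : Tendsto (fun t : ℝ => ‖t⁻¹ • v - a‖ + 1) atTop (nhds 2) := by
    have := ((h1.sub_const a).norm).add_const 1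
    simpa [ha, one_add_one_eq_two] using this
  have h3 : Tendsto (fun t : ℝ => ‖v‖ ^ 2 * t⁻¹ - 2 * (inner ℝ a v : ℝ)) atTop
      (nhds (-(2 * (inner ℝ a v : ℝ)))) := by
    have := (tendsto_inv_atTop_zero.const_mul (‖v‖ ^ 2)).sub_const (2 * (inner ℝ a v : ℝ))
    simpa using this
  have hmain := h3.div h2 (by norm_num)
  have hval : -(2 * (inner ℝ a v : ℝ)) / 2 = -(inner ℝ a v : ℝ) := by ring
  rw [hval] at hmain
  refine hmain.congr' ?_
  filter_upwards [eventually_gt_atTop (0 : ℝ)] with t ht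
  have hN : (0 : ℝ) ≤ ‖v - t • a‖ := norm_nonneg _
  have hnorm : ‖t⁻¹ • v - a‖ = ‖v - t • a‖ / t := by
    rw [show t⁻¹ • v - a = t⁻¹ • (v - t • a) by
      rw [smul_sub, smul_smul, inv_mul_cancel₀ ht.ne', one_smul]]
    rw [norm_smul, Real.norm_eq_abs, abs_inv, abs_of_pos ht]
    ring
  have key : (‖v - t • a‖ - t) * (‖v - t • a‖ + t) = ‖v‖ ^ 2 - 2 * t * (inner ℝ a v : ℝ) := by
    have h := norm_sub_sq_real v (t • a)
    rw [real_inner_smul_right, norm_smul, Real.norm_eq_abs, abs_of_pos ht, ha,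
      real_inner_comm] at h
    nlinarith [h]
  have hden : (0 : ℝ) < ‖v - t • a‖ + t := by linarith
  simp only [Pi.div_apply]
  rw [hnorm]
  field_simp
  nlinarith [key]

theorem pullback_point_to_hyperplane {m : ℕ} (φ : SPD m ≃ SymMat m)
    (a : Matrix (Fin m) (Fin m) ℝ) (ha : a.IsSymm) (hnorm : frobNorm a = 1)
    (p x : SPD m) (hxp : x ≠ p) :
    Tendsto
      (fun t : ℝ =>
        pbDist φ x p *
          (pbDist φ (oplus φ (ominus φ p) x) (φ.symm ⟨t • a, ha.smul t⟩) - t) /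
          sNorm φ (oplus φ (ominus φ p) x))
      atTop (nhds (frobInner a ((φ p).1 - (φ x).1))) := by
  set v : Matrix (Fin m) (Fin m) ℝ := (φ x).1 - (φ p).1 with hvdef
  have hφo : (φ (oplus φ (ominus φ p) x)).1 = v := by
    simp only [oplus, ominus, hvdef]
    erw [Equiv.apply_symm_apply]
    dsimp only
    erw [Equiv.apply_symm_apply]
    exact neg_add_eq_sub (φ p).1 (φ x).1
  have hvne : v ≠ 0 := by
    intro h
    exact hxp (φ.injective (Subtype.ext (sub_eq_zero.mp h)))
  have hmEv : mE v ≠ 0 := by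
    intro h
    apply hvne
    ext i j
    have := congrArg (fun w : EuclideanSpace ℝ (Fin m × Fin m) => w (i, j)) h
    simpa [mE] using this
  have hc : frobNorm v ≠ 0 := by
    rw [← mE_norm]
    exact norm_ne_zero_iff.mpr hmEv
  have hfe : (fun t : ℝ =>
        pbDist φ x p *
          (pbDist φ (oplus φ (ominus φ p) x) (φ.symm ⟨t • a, ha.smul t⟩) - t) /
          sNorm φ (oplus φ (ominus φ p) x)) =
      fun t : ℝ => ‖mE v - t • mE a‖ - t := by
    funext t
    have hmE : mE (v - t • a) = mE v - t • mE a := by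
      ext q; rfl
    rw [pbDist, pbDist, sNorm, hφo]
    erw [Equiv.apply_symm_apply]
    rw [← hvdef]
    rw [show frobNorm (v - t • a) = ‖mE v - t • mE a‖ by rw [← hmE, mE_norm]]
    rw [mul_comm, mul_div_assoc, div_self hc, mul_one]
  rw [hfe]
  have hval : frobInner a ((φ p).1 - (φ x).1) = -(inner ℝ (mE a) (mE v) : ℝ) := by
    rw [mE_inner]
    have : (φ p).1 - (φ x).1 = -v := by simp [hvdef]
    rw [this]
    simp only [frobInner, Matrix.mul_neg, Matrix.trace_neg]
  rw [hval]
  exact busemann (mE a) (mE v) (by rw [mE_norm]; exact hnorm)
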